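/- arXiv:1911.04842 — 5 statements merged into one kernel-verified Lean document; each statement's English description precedes it below -/
import Mathlib

section
/- (Proposition 1) The maximin information is bounded by the maximal leakage: $I_*(S;X) \leq L_0(S \to X)$. Equivalently, in cardinality form: $|\mathcal{P}^*| \cdot \min_{x \in \llbracket X\rrbracket} |\llbracket S\mid x\rrbracket| \leq |\llbracket S\rrbracket|$, where $\mathcal{P}^*$ is the set of equivalence classes of overlap connectedness on $\llbracket S\rrbracket$; hence $\log_2 |\mathcal{P}^*| \leq \max_{x \in \llbracket X\rrbracket} \log_2 (|\llbracket S\rrbracket| / |\llbracket S\mid x\rrbracket|)$. -/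
/-! Overlap connectedness is the transitive closure of the symmetric relation "lie in a common
conditional range", so its classes are pairwise disjoint subsets of `⟦S⟧`. The class of `S ω`
contains all of `⟦S∣X ω⟧`, so every class has at least `min_x |⟦S∣x⟧|` elements. Counting them
gives the cardinality bound; at a minimising `x` it reads `|𝒫*| ≤ |⟦S⟧| / |⟦S∣x⟧|`. -/

/-- The conditional range `⟦S∣x⟧ = {S(ω) : ω ∈ Ω, X(ω) = x}`. -/
def condRange {Ω 𝕊 𝕏 : Type*} (S : Ω → 𝕊) (X : Ω → 𝕏) (x : 𝕏) : Set 𝕊 :=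
  {s | ∃ ω, X ω = x ∧ S ω = s}

/-- Overlap connectedness: `s ↭ s'` iff there is a finite sequence `x₁,…,xₙ ∈ ⟦X⟧` with
`s ∈ ⟦S∣x₁⟧`, `s' ∈ ⟦S∣xₙ⟧` and consecutive conditional ranges intersecting. -/
def OverlapConn {Ω 𝕊 𝕏 : Type*} (S : Ω → 𝕊) (X : Ω → 𝕏) (s s' : 𝕊) : Prop :=
  ∃ n : ℕ, ∃ xs : Fin (n + 1) → 𝕏,
    (∀ i, xs i ∈ Set.range X) ∧
    s ∈ condRange S X (xs 0) ∧ s' ∈ condRange S X (xs (Fin.last n)) ∧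
    ∀ i : Fin n, (condRange S X (xs i.castSucc) ∩ condRange S X (xs i.succ)).Nonempty

/-- The set `𝒫*` of equivalence classes of overlap connectedness on `⟦S⟧`. -/
def overlapClasses {Ω 𝕊 𝕏 : Type*} (S : Ω → 𝕊) (X : Ω → 𝕏) : Set (Set 𝕊) :=
  {C | ∃ s ∈ Set.range S, C = {s' | OverlapConn S X s s'}}

open Relation Set

theorem Set.ncard_mul_le_ncard_of_pairwiseDisjoint {α : Type*} {P : Set (Set α)} {T : Set α}
    {m : ℕ} (hT : T.Finite) (hP : P.PairwiseDisjoint id) (hPT : ∀ C ∈ P, C ⊆ T)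
    (hm : ∀ C ∈ P, m ≤ C.ncard) : P.ncard * m ≤ T.ncard := by
  have hPfin : P.Finite := hT.finite_subsets.subset hPT
  calc P.ncard * m = ∑ _C ∈ hPfin.toFinset, m := by
        simp [ncard_eq_toFinset_card P hPfin, mul_comm]
    _ ≤ ∑ C ∈ hPfin.toFinset, C.ncard :=
        Finset.sum_le_sum fun C hC => hm C (hPfin.mem_toFinset.mp hC)
    _ = (⋃ C ∈ P, C).ncard := by
        rw [hPfin.ncard_biUnion (fun C hC => hT.subset (hPT C hC)) hP,
          finsum_mem_eq_finite_toFinset_sum _ hPfin]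
    _ ≤ T.ncard := ncard_le_ncard (iUnion₂_subset hPT) hT

namespace Relation

variable {α : Type*} {r : α → α → Prop} [Std.Symm r]

theorem TransGen.setOf_eq {a b : α} (h : TransGen r a b) :
    {c | TransGen r a c} = {c | TransGen r b c} :=
  ext fun _ => ⟨(symm h).trans, h.trans⟩

theorem pairwiseDisjoint_range_setOf_transGen :
    (range fun a => {b | TransGen r a b}).PairwiseDisjoint id := by
  rintro _ ⟨a, rfl⟩ _ ⟨b, rfl⟩ hne
  refine disjoint_left.mpr fun c hac hbc => hne ?_
  exact TransGen.setOf_eq (hac.trans (symm hbc))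

end Relation

section OverlapConn

variable {Ω 𝕊 𝕏 : Type*} {S : Ω → 𝕊} {X : Ω → 𝕏} {s t : 𝕊} {x : 𝕏}

variable (S X) in
def SharesCondRange (s t : 𝕊) : Prop :=
  ∃ x, s ∈ condRange S X x ∧ t ∈ condRange S X x

instance : Std.Symm (SharesCondRange S X) where
  symm _ _ := fun ⟨x, hs, ht⟩ => ⟨x, ht, hs⟩

theorem mem_range_of_mem_condRange (h : s ∈ condRange S X x) : x ∈ range X := by
  obtain ⟨ω, hω, -⟩ := h
  exact ⟨ω, hω⟩

theorem mem_range_of_transGen_sharesCondRange (h : TransGen (SharesCondRange S X) s t) :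
    t ∈ range S := by
  obtain ⟨u, -, x, -, ω, -, hω⟩ := TransGen.tail'_iff.mp h
  exact ⟨ω, hω⟩

theorem transGen_of_overlapConn (h : OverlapConn S X s t) :
    TransGen (SharesCondRange S X) s t := by
  obtain ⟨n, xs, -, hs, ht, hov⟩ := h
  induction n generalizing s with
  | zero => exact .single ⟨xs 0, hs, ht⟩
  | succ n ih =>
    obtain ⟨u, hu₀, hu₁⟩ := hov 0
    exact .head ⟨xs 0, hs, hu₀⟩
      (ih (fun i => xs i.succ) hu₁ (by simpa [Fin.succ_last] using ht) fun i => hov i.succ)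

theorem overlapConn_of_transGen (h : TransGen (SharesCondRange S X) s t) :
    OverlapConn S X s t := by
  induction h using TransGen.head_induction_on with
  | single h =>
    obtain ⟨x, hs, ht⟩ := h
    exact ⟨0, fun _ => x, fun _ => mem_range_of_mem_condRange hs, hs, ht, fun i => i.elim0⟩
  | head hsu _ ih =>
    obtain ⟨x, hs, hu⟩ := hsu
    obtain ⟨n, xs, hmem, hu', ht, hov⟩ := ih
    refine ⟨n + 1, Fin.cons x xs, Fin.cases (mem_range_of_mem_condRange hs) hmem, hs,
      by simpa using ht, Fin.cases ⟨_, hu, hu'⟩ fun i => by simpa using hov i⟩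

theorem overlapConn_iff_transGen :
    OverlapConn S X s t ↔ TransGen (SharesCondRange S X) s t :=
  ⟨transGen_of_overlapConn, overlapConn_of_transGen⟩

theorem overlapClasses_eq_image_setOf_transGen :
    overlapClasses S X = (fun s => {t | TransGen (SharesCondRange S X) s t}) '' range S := by
  ext C
  simp only [overlapClasses, overlapConn_iff_transGen, mem_image, mem_ofPred_eq, eq_comm]

theorem ncard_overlapClasses_mul_le [Finite 𝕊] {m : ℕ}
    (hm : ∀ x ∈ range X, m ≤ (condRange S X x).ncard) :
    (overlapClasses S X).ncard * m ≤ (range S).ncard := by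
  rw [overlapClasses_eq_image_setOf_transGen]
  refine ncard_mul_le_ncard_of_pairwiseDisjoint (toFinite _)
    (pairwiseDisjoint_range_setOf_transGen.subset (image_subset_range _ _)) ?_ ?_
  · rintro _ ⟨s, -, rfl⟩ t ht
    exact mem_range_of_transGen_sharesCondRange ht
  · rintro _ ⟨_, ⟨ω, rfl⟩, rfl⟩
    exact (hm _ ⟨ω, rfl⟩).trans (ncard_le_ncard fun t ht => .single ⟨X ω, ⟨ω, rfl, rfl⟩, ht⟩)

end OverlapConn

/-- Proposition 1: `I⋆(S;X) ≤ L₀(S → X)`.  In cardinality form,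
`|𝒫*| · min_{x ∈ ⟦X⟧} |⟦S∣x⟧| ≤ |⟦S⟧|`; hence
`log₂ |𝒫*| ≤ max_{x ∈ ⟦X⟧} log₂(|⟦S⟧| / |⟦S∣x⟧|)`. -/
theorem maximin_le_maximal_leakage {Ω 𝕊 𝕏 : Type*} [Nonempty Ω] [Fintype 𝕊] [Fintype 𝕏]
    (S : Ω → 𝕊) (X : Ω → 𝕏) :
    (overlapClasses S X).ncard * sInf ((fun x => (condRange S X x).ncard) '' Set.range X)
      ≤ (Set.range S).ncard
    ∧ Real.logb 2 (((overlapClasses S X).ncard : ℝ)) ≤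
      ⨆ x : Set.range X,
        Real.logb 2 (((Set.range S).ncard : ℝ) / ((condRange S X (x : 𝕏)).ncard : ℝ)) := by
  obtain ⟨ω₀⟩ := ‹Nonempty Ω›
  set m := sInf ((fun x => (condRange S X x).ncard) '' range X)
  obtain ⟨_, ⟨ω₁, rfl⟩, hm : (condRange S X (X ω₁)).ncard = m⟩ :
      m ∈ (fun x => (condRange S X x).ncard) '' range X :=
    Nat.sInf_mem ⟨_, mem_image_of_mem _ ⟨ω₀, rfl⟩⟩
  have hcount : (overlapClasses S X).ncard * m ≤ (range S).ncard :=
    ncard_overlapClasses_mul_le fun x hx => Nat.sInf_le (mem_image_of_mem _ hx)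
  refine ⟨hcount, ?_⟩
  have hm_pos : 0 < m := hm ▸ (ncard_pos (toFinite _)).mpr ⟨S ω₁, ω₁, rfl, rfl⟩
  have hk_pos : 0 < (overlapClasses S X).ncard :=
    (ncard_pos (toFinite _)).mpr ⟨_, S ω₀, ⟨ω₀, rfl⟩, rfl⟩
  have hlog : Real.logb 2 ((overlapClasses S X).ncard : ℝ)
      ≤ Real.logb 2 ((range S).ncard / (condRange S X (X ω₁)).ncard) := by
    refine Real.logb_le_logb_of_le one_lt_two (by positivity) ?_
    rw [hm, le_div_iff₀ (by positivity)]
    exact_mod_cast hcount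
  exact le_ciSup_of_le (finite_range _).bddAbove ⟨X ω₁, ω₁, rfl⟩ hlog
end

section
/- (Lemma 3, part (a)) Let $\mathcal{P}_{G_X}$ be any decomposition of the confusability graph $G_X$, i.e., a partition of $\llbracket X\rrbracket$ such that there is no edge of $G_X$ between distinct blocks. For a block $\mathcal{X} \subseteq \llbracket X\rrbracket$ write $\llbracket S\mid\mathcal{X}\rrbracket = \bigcup_{x \in \mathcal{X}} \llbracket S\mid x\rrbracket$. Then $\{\llbracket S\mid\mathcal{X}\rrbracket : \mathcal{X} \in \mathcal{P}_{G_X}\}$ is a partition of $\llbracket S\rrbracket$ and it is overlap isolated: no point of one block is overlap connected to a point of a different block. -/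
/-- `P` is a partition of `U` (nonempty, pairwise disjoint blocks covering `U`). -/
def IsPartitionOf {α : Type*} (P : Set (Set α)) (U : Set α) : Prop :=
  (∀ A ∈ P, A.Nonempty) ∧ (∀ A ∈ P, ∀ B ∈ P, A ≠ B → Disjoint A B) ∧ ⋃₀ P = U

/-- `P` is overlap isolated. -/
def OverlapIsolated {Ω 𝕊 𝕏 : Type*} (S : Ω → 𝕊) (X : Ω → 𝕏) (P : Set (Set 𝕊)) : Prop :=
  ∀ A ∈ P, ∀ B ∈ P, A ≠ B → ∀ s ∈ A, ∀ s' ∈ B, ¬ OverlapConn S X s s'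

/-!
Distinct blocks of the decomposition have disjoint conditional ranges, so a single step of an
overlap chain never leaves a block: the union `⟦S∣𝒳⟧` of the conditional ranges of a block is
closed under overlap connectedness, while unions over distinct blocks are disjoint.
-/

open Set

namespace IsPartitionOf

variable {α : Type*} {P : Set (Set α)} {U : Set α} {a : α} {A B : Set α}

theorem exists_mem (hP : IsPartitionOf P U) (ha : a ∈ U) : ∃ A ∈ P, a ∈ A := by
  rw [← hP.2.2] at ha
  simpa only [mem_sUnion, exists_prop] using ha

theorem subset (hP : IsPartitionOf P U) (hA : A ∈ P) : A ⊆ U :=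
  hP.2.2 ▸ subset_sUnion_of_mem hA

end IsPartitionOf

section ConfusabilityDecomposition

variable {Ω 𝕊 𝕏 : Type*} {S : Ω → 𝕊} {X : Ω → 𝕏}

theorem condRange_subset_range (x : 𝕏) : condRange S X x ⊆ range S := by
  rintro _ ⟨ω, -, rfl⟩
  exact mem_range_self ω

theorem condRange_nonempty {x : 𝕏} (hx : x ∈ range X) : (condRange S X x).Nonempty := by
  obtain ⟨ω, rfl⟩ := hx
  exact ⟨S ω, ω, rfl, rfl⟩

theorem mem_condRange_self (ω : Ω) : S ω ∈ condRange S X (X ω) :=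
  ⟨ω, rfl, rfl⟩

/-- The paper's `⟦S∣𝒳⟧`. -/
def condRangeOn (S : Ω → 𝕊) (X : Ω → 𝕏) (A : Set 𝕏) : Set 𝕊 :=
  ⋃ x ∈ A, condRange S X x

/-- A decomposition of the confusability graph `G_X`: "no edge between distinct blocks" says
that conditional ranges of points in distinct blocks are disjoint. -/
def IsConfusabilityDecomposition (S : Ω → 𝕊) (X : Ω → 𝕏) (P : Set (Set 𝕏)) : Prop :=
  IsPartitionOf P (range X) ∧
    ∀ A ∈ P, ∀ B ∈ P, A ≠ B → ∀ x ∈ A, ∀ x' ∈ B, condRange S X x ∩ condRange S X x' = ∅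

namespace IsConfusabilityDecomposition

variable {P : Set (Set 𝕏)} {A B : Set 𝕏} {x y : 𝕏} {s s' : 𝕊}

theorem eq_of_inter_nonempty (hdec : IsConfusabilityDecomposition S X P) (hA : A ∈ P)
    (hB : B ∈ P) (hx : x ∈ A) (hy : y ∈ B) (h : (condRange S X x ∩ condRange S X y).Nonempty) :
    A = B := by
  by_contra hAB
  exact h.ne_empty (hdec.2 A hA B hB hAB x hx y hy)

theorem mem_of_mem_condRangeOn (hdec : IsConfusabilityDecomposition S X P) (hA : A ∈ P)
    (hs : s ∈ condRangeOn S X A) (hy : y ∈ range X) (hsy : s ∈ condRange S X y) : y ∈ A := by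
  obtain ⟨x, hx, hsx⟩ := mem_iUnion₂.mp hs
  obtain ⟨B, hB, hyB⟩ := hdec.1.exists_mem hy
  rwa [hdec.eq_of_inter_nonempty hA hB hx hyB ⟨s, hsx, hsy⟩]

theorem disjoint_condRangeOn (hdec : IsConfusabilityDecomposition S X P) (hA : A ∈ P)
    (hB : B ∈ P) (hAB : A ≠ B) : Disjoint (condRangeOn S X A) (condRangeOn S X B) := by
  refine disjoint_left.mpr fun s hsA hsB => hAB ?_
  obtain ⟨x, hx, hsx⟩ := mem_iUnion₂.mp hsA
  obtain ⟨y, hy, hsy⟩ := mem_iUnion₂.mp hsB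
  exact hdec.eq_of_inter_nonempty hA hB hx hy ⟨s, hsx, hsy⟩

theorem mem_condRangeOn_of_overlapConn (hdec : IsConfusabilityDecomposition S X P) (hA : A ∈ P)
    (hs : s ∈ condRangeOn S X A) (hss' : OverlapConn S X s s') : s' ∈ condRangeOn S X A := by
  obtain ⟨n, xs, hxs, hs₀, hs'n, hstep⟩ := hss'
  have hchain : ∀ i, xs i ∈ A := by
    intro i
    induction i using Fin.induction with
    | zero => exact hdec.mem_of_mem_condRangeOn hA hs (hxs 0) hs₀
    | succ i ih =>
      obtain ⟨t, hti, hti'⟩ := hstep i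
      exact hdec.mem_of_mem_condRangeOn hA (mem_biUnion ih hti) (hxs i.succ) hti'
  exact mem_biUnion (hchain (Fin.last n)) hs'n

theorem isPartitionOf_condRangeOn (hdec : IsConfusabilityDecomposition S X P) :
    IsPartitionOf {C | ∃ A ∈ P, C = condRangeOn S X A} (range S) := by
  refine ⟨?_, ?_, ?_⟩
  · rintro _ ⟨A, hA, rfl⟩
    obtain ⟨x, hx⟩ := hdec.1.1 A hA
    exact (condRange_nonempty (hdec.1.subset hA hx)).mono (subset_biUnion_of_mem hx)
  · rintro _ ⟨A, hA, rfl⟩ _ ⟨B, hB, rfl⟩ hAB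
    exact hdec.disjoint_condRangeOn hA hB fun h => hAB (h ▸ rfl)
  · refine Subset.antisymm ?_ ?_
    · rintro s ⟨_, ⟨A, -, rfl⟩, hs⟩
      obtain ⟨x, -, hsx⟩ := mem_iUnion₂.mp hs
      exact condRange_subset_range x hsx
    · rintro _ ⟨ω, rfl⟩
      obtain ⟨A, hA, hωA⟩ := hdec.1.exists_mem (mem_range_self ω)
      exact ⟨_, ⟨A, hA, rfl⟩, mem_biUnion hωA (mem_condRange_self ω)⟩

theorem overlapIsolated_condRangeOn (hdec : IsConfusabilityDecomposition S X P) :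
    OverlapIsolated S X {C | ∃ A ∈ P, C = condRangeOn S X A} := by
  rintro _ ⟨A, hA, rfl⟩ _ ⟨B, hB, rfl⟩ hAB s hs s' hs' hss'
  have hAB : A ≠ B := fun h => hAB (h ▸ rfl)
  exact disjoint_left.mp (hdec.disjoint_condRangeOn hA hB hAB)
    (hdec.mem_condRangeOn_of_overlapConn hA hs hss') hs'

end IsConfusabilityDecomposition

end ConfusabilityDecomposition

theorem graph_decomposition_isolated_general {Ω 𝕊 𝕏 : Type*}
    (S : Ω → 𝕊) (X : Ω → 𝕏) (P : Set (Set 𝕏))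
    (hP : IsPartitionOf P (Set.range X))
    (hNoEdge : ∀ A ∈ P, ∀ B ∈ P, A ≠ B → ∀ x ∈ A, ∀ x' ∈ B,
      condRange S X x ∩ condRange S X x' = ∅) :
    IsPartitionOf {C : Set 𝕊 | ∃ A ∈ P, C = ⋃ x ∈ A, condRange S X x} (Set.range S)
    ∧ OverlapIsolated S X {C : Set 𝕊 | ∃ A ∈ P, C = ⋃ x ∈ A, condRange S X x} := by
  have hdec : IsConfusabilityDecomposition S X P := ⟨hP, hNoEdge⟩
  exact ⟨hdec.isPartitionOf_condRangeOn, hdec.overlapIsolated_condRangeOn⟩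

/-- Lemma 3(a): if `𝒫` is a decomposition of the confusability graph `G_X` (a partition of `⟦X⟧`
with no edge between distinct blocks, i.e. conditional ranges of points of distinct blocks are
disjoint), then `{ ⟦S∣𝒳⟧ : 𝒳 ∈ 𝒫 }` with `⟦S∣𝒳⟧ = ⋃_{x ∈ 𝒳} ⟦S∣x⟧` is an overlap isolated
partition of `⟦S⟧`. -/
theorem graph_decomposition_isolated {Ω 𝕊 𝕏 : Type*} [Nonempty Ω] [Fintype 𝕊] [Fintype 𝕏]
    (S : Ω → 𝕊) (X : Ω → 𝕏) (P : Set (Set 𝕏))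
    (hP : IsPartitionOf P (Set.range X))
    (hNoEdge : ∀ A ∈ P, ∀ B ∈ P, A ≠ B → ∀ x ∈ A, ∀ x' ∈ B,
      condRange S X x ∩ condRange S X x' = ∅) :
    IsPartitionOf {C : Set 𝕊 | ∃ A ∈ P, C = ⋃ x ∈ A, condRange S X x} (Set.range S)
    ∧ OverlapIsolated S X {C : Set 𝕊 | ∃ A ∈ P, C = ⋃ x ∈ A, condRange S X x} :=
  graph_decomposition_isolated_general S X P hP hNoEdge
end

section
/- (Maximin information cannot increase under quantization) Let $f : \mathbb{X} \to \hat{\mathbb{X}}$ be a map into a finite type and set $\hat{X} = f \circ X$, so that $\llbracket S\mid\hat{x}\rrbracket = \bigcup_{x \in \llbracket X\rrbracket,\ f(x)=\hat{x}} \llbracket S\mid x\rrbracket$ for $\hat{x} \in \llbracket\hat{X}\rrbracket$. Then the number of connected components of the confusability graph $G_{\hat{X}}$ (on vertex set $\llbracket\hat{X}\rrbracket$, with edges between distinct $\hat{x},\hat{x}'$ iff $\llbracket S\mid\hat{x}\rrbracket \cap \llbracket S\mid\hat{x}'\rrbracket \neq \emptyset$) is at most the number of connected components of $G_X$; equivalently,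 $I_*(S;\hat{X}) \leq I_*(S;X)$. -/
/-- Adjacency in the confusability graph. -/
def ConfAdj {Ω 𝕊 𝕏 : Type*} (S : Ω → 𝕊) (X : Ω → 𝕏) (x x' : 𝕏) : Prop :=
  x ≠ x' ∧ x ∈ Set.range X ∧ x' ∈ Set.range X ∧
    (condRange S X x ∩ condRange S X x').Nonempty

/-- Connectivity (same connected component) in the confusability graph. -/
def ConfConn {Ω 𝕊 𝕏 : Type*} (S : Ω → 𝕊) (X : Ω → 𝕏) (x x' : 𝕏) : Prop :=
  x ∈ Set.range X ∧ x' ∈ Set.range X ∧ Relation.ReflTransGen (ConfAdj S X) x x'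

/-- The set of connected components of the confusability graph. -/
def confComponents {Ω 𝕊 𝕏 : Type*} (S : Ω → 𝕊) (X : Ω → 𝕏) : Set (Set 𝕏) :=
  {C | ∃ x ∈ Set.range X, C = {x' | ConfConn S X x x'}}

/-!
Since `⟦S∣x⟧ ⊆ ⟦S∣f x⟧`, the map `f` sends every edge of `G_X` to an edge of `G_{f ∘ X}` or
contracts it to a vertex, hence sends each component of `G_X` into a component of `G_{f ∘ X}`.
Every vertex of `G_{f ∘ X}` is some `f x`, so this map of components is onto.
-/

theorem Set.SurjOn.ncard_le {α β : Type*} {g : α → β} {s : Set α} {t : Set β}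
    (hg : Set.SurjOn g s t) (hs : s.Finite) : t.ncard ≤ s.ncard :=
  (Set.ncard_le_ncard hg (hs.image g)).trans (Set.ncard_image_le hs)

theorem Real.logb_natCast_le_logb_natCast {b : ℝ} (hb : 1 < b) {m n : ℕ} (h : m ≤ n) :
    Real.logb b m ≤ Real.logb b n := by
  rcases m.eq_zero_or_pos with rfl | hm
  · rw [Nat.cast_zero, Real.logb_zero]
    exact div_nonneg (Real.log_natCast_nonneg n) (Real.log_nonneg hb.le)
  · exact Real.logb_le_logb_of_le hb (by positivity) (by exact_mod_cast h)

section Quantization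

variable {Ω 𝕊 𝕏 𝕏h : Type*} (S : Ω → 𝕊) (X : Ω → 𝕏) (f : 𝕏 → 𝕏h)

theorem condRange_comp (xh : 𝕏h) :
    condRange S (f ∘ X) xh = ⋃ x ∈ {x ∈ Set.range X | f x = xh}, condRange S X x := by
  ext s
  simp only [condRange, Set.mem_iUnion, Set.mem_ofPred_eq, Function.comp_apply, exists_prop]
  constructor
  · rintro ⟨ω, hω, hs⟩
    exact ⟨X ω, ⟨⟨ω, rfl⟩, hω⟩, ω, rfl, hs⟩
  · rintro ⟨x, ⟨-, rfl⟩, ω, rfl, hs⟩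
    exact ⟨ω, rfl, hs⟩

theorem condRange_subset_condRange_comp (x : 𝕏) :
    condRange S X x ⊆ condRange S (f ∘ X) (f x) := by
  rintro s ⟨ω, rfl, hs⟩
  exact ⟨ω, rfl, hs⟩

theorem mem_range_comp {x : 𝕏} (hx : x ∈ Set.range X) : f x ∈ Set.range (f ∘ X) := by
  obtain ⟨ω, rfl⟩ := hx
  exact ⟨ω, rfl⟩

variable {S X}

theorem ConfConn.refl {x : 𝕏} (hx : x ∈ Set.range X) : ConfConn S X x x :=
  ⟨hx, hx, .refl⟩

theorem ConfConn.trans {x y z : 𝕏} (hxy : ConfConn S X x y) (hyz : ConfConn S X y z) :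
    ConfConn S X x z :=
  ⟨hxy.1, hyz.2.1, hxy.2.2.trans hyz.2.2⟩

theorem ConfAdj.comp {x x' : 𝕏} (h : ConfAdj S X x x') :
    Relation.ReflTransGen (ConfAdj S (f ∘ X)) (f x) (f x') := by
  obtain ⟨-, hx, hx', s, hs, hs'⟩ := h
  by_cases hf : f x = f x'
  · rw [hf]
  · exact .single ⟨hf, mem_range_comp X f hx, mem_range_comp X f hx',
      s, condRange_subset_condRange_comp S X f x hs, condRange_subset_condRange_comp S X f x' hs'⟩

theorem ConfConn.comp {x x' : 𝕏} (h : ConfConn S X x x') :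
    ConfConn S (f ∘ X) (f x) (f x') :=
  ⟨mem_range_comp X f h.1, mem_range_comp X f h.2.1,
    h.2.2.lift' f fun _ _ hadj => hadj.comp f⟩

theorem setOf_confConn_comp_of_confConn {x : 𝕏} (hx : x ∈ Set.range X) :
    {y | ∃ x' ∈ {x' | ConfConn S X x x'}, ConfConn S (f ∘ X) (f x') y} =
      {y | ConfConn S (f ∘ X) (f x) y} := by
  ext y
  constructor
  · rintro ⟨x', hxx', hy⟩
    exact (hxx'.comp f).trans hy
  · exact fun hy => ⟨x, ConfConn.refl hx, hy⟩

theorem surjOn_confComponents_comp :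
    Set.SurjOn (fun C => {y | ∃ x ∈ C, ConfConn S (f ∘ X) (f x) y})
      (confComponents S X) (confComponents S (f ∘ X)) := by
  rintro _ ⟨_, ⟨ω, rfl⟩, rfl⟩
  exact ⟨_, ⟨X ω, ⟨ω, rfl⟩, rfl⟩, setOf_confConn_comp_of_confConn f ⟨ω, rfl⟩⟩

theorem ncard_confComponents_comp_le [Finite 𝕏] :
    (confComponents S (f ∘ X)).ncard ≤ (confComponents S X).ncard :=
  (surjOn_confComponents_comp f).ncard_le (Set.toFinite _)

end Quantization

theorem maximin_quantization_monotone_general {Ω 𝕊 𝕏 𝕏h : Type*}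
    [Fintype 𝕏] (S : Ω → 𝕊) (X : Ω → 𝕏) (f : 𝕏 → 𝕏h) :
    (∀ xh ∈ Set.range (f ∘ X),
      condRange S (f ∘ X) xh = ⋃ x ∈ {x ∈ Set.range X | f x = xh}, condRange S X x)
    ∧ (confComponents S (f ∘ X)).ncard ≤ (confComponents S X).ncard
    ∧ Real.logb 2 (((confComponents S (f ∘ X)).ncard : ℝ))
        ≤ Real.logb 2 (((confComponents S X).ncard : ℝ)) :=
  ⟨fun xh _ => condRange_comp S X f xh, ncard_confComponents_comp_le f,
    Real.logb_natCast_le_logb_natCast one_lt_two (ncard_confComponents_comp_le f)⟩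

/-- Maximin information cannot increase under quantization: for `X̂ = f ∘ X` (so that
`⟦S∣x̂⟧ = ⋃_{x ∈ ⟦X⟧, f(x) = x̂} ⟦S∣x⟧`), the number of connected components of `G_{X̂}` is at
most that of `G_X`; equivalently `I⋆(S;X̂) ≤ I⋆(S;X)`. -/
theorem maximin_quantization_monotone {Ω 𝕊 𝕏 𝕏h : Type*} [Nonempty Ω] [Fintype 𝕊]
    [Fintype 𝕏] [Fintype 𝕏h] (S : Ω → 𝕊) (X : Ω → 𝕏) (f : 𝕏 → 𝕏h) :
    (∀ xh ∈ Set.range (f ∘ X),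
      condRange S (f ∘ X) xh = ⋃ x ∈ {x ∈ Set.range X | f x = xh}, condRange S X x)
    ∧ (confComponents S (f ∘ X)).ncard ≤ (confComponents S X).ncard
    ∧ Real.logb 2 (((confComponents S (f ∘ X)).ncard : ℝ))
        ≤ Real.logb 2 (((confComponents S X).ncard : ℝ)) :=
  maximin_quantization_monotone_general S X f
end

section
/- (Merging within a connected component preserves maximin information, used in Algorithm 2) Let $\mathcal{Q}$ be a partition of $\llbracket X\rrbracket$ and let $G_{\mathcal{Q}}$ be the simple graph on the blocks of $\mathcal{Q}$ with an edge between distinct blocks $\mathcal{X}, \mathcal{X}'$ iff $\llbracket S\mid\mathcal{X}\rrbracket \cap \llbracket S\mid\mathcal{X}'\rrbracket \neq \emptyset$, where $\llbracket S\mid\mathcal{X}\rrbracket = \bigcup_{x\in\mathcal{X}} \llbracket S\mid x\rrbracket$. If $\mathcal{X}_1 \neq \mathcal{X}_2 \in \mathcal{Q}$ lie in the same connected component of $G_{\mathcal{Q}}$, then the graph $G_{\mathcal{Q}'}$ induced by the merged partition $\mathcal{Q}' = (\mathcal{Q} \setminus \{\mathcal{X}_1, \mathcal{X}_2\}) \cup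 \{\mathcal{X}_1 \cup \mathcal{X}_2\}$ has exactly the same number of connected components as $G_{\mathcal{Q}}$; equivalently, the maximin information $I_*(S;\hat{X})$ of the induced released variable is unchanged by the merge. -/
/-- `⟦S∣𝒳⟧ = ⋃_{x ∈ 𝒳} ⟦S∣x⟧` for a cluster `𝒳 ⊆ ⟦X⟧`. -/
def condRangeSet {Ω 𝕊 𝕏 : Type*} (S : Ω → 𝕊) (X : Ω → 𝕏) (A : Set 𝕏) : Set 𝕊 :=
  ⋃ x ∈ A, condRange S X x

/-- Adjacency between distinct blocks of a quantization `𝒬` whose conditional ranges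
intersect (the graph `G_𝒬`). -/
def QAdj {Ω 𝕊 𝕏 : Type*} (S : Ω → 𝕊) (X : Ω → 𝕏) (Q : Set (Set 𝕏)) (A B : Set 𝕏) : Prop :=
  A ∈ Q ∧ B ∈ Q ∧ A ≠ B ∧ (condRangeSet S X A ∩ condRangeSet S X B).Nonempty

/-- Two blocks lie in the same connected component of `G_𝒬`. -/
def QConn {Ω 𝕊 𝕏 : Type*} (S : Ω → 𝕊) (X : Ω → 𝕏) (Q : Set (Set 𝕏)) (A B : Set 𝕏) : Prop :=
  A ∈ Q ∧ B ∈ Q ∧ Relation.ReflTransGen (QAdj S X Q) A B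

/-- The set of connected components of `G_𝒬`. -/
def QComponents {Ω 𝕊 𝕏 : Type*} (S : Ω → 𝕊) (X : Ω → 𝕏) (Q : Set (Set 𝕏)) :
    Set (Set (Set 𝕏)) :=
  {C | ∃ A ∈ Q, C = {B | QConn S X Q A B}}

section Aux

variable {Ω 𝕊 𝕏 : Type*} (S : Ω → 𝕊) (X : Ω → 𝕏)

lemma qadj_symm {Q : Set (Set 𝕏)} : Symmetric (QAdj S X Q) := by
  rintro A B ⟨hA, hB, hne, s, hs1, hs2⟩
  exact ⟨hB, hA, hne.symm, s, hs2, hs1⟩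

lemma qconn_symm {Q : Set (Set 𝕏)} {A B : Set 𝕏} (h : QConn S X Q A B) :
    QConn S X Q B A :=
  ⟨h.2.1, h.1, (by haveI : Std.Symm (QAdj S X Q) := ⟨fun _ _ h => qadj_symm S X h⟩; exact Std.Symm.symm _ _ h.2.2)⟩

lemma qconn_trans {Q : Set (Set 𝕏)} {A B C : Set 𝕏} (h : QConn S X Q A B)
    (h' : QConn S X Q B C) : QConn S X Q A C :=
  ⟨h.1, h'.2.1, h.2.2.trans h'.2.2⟩

lemma comp_eq_of_conn {Q : Set (Set 𝕏)} {A A' : Set 𝕏} (h : QConn S X Q A A') :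
    {B | QConn S X Q A B} = {B | QConn S X Q A' B} := by
  ext B
  exact ⟨fun hb => qconn_trans S X (qconn_symm S X h) hb,
    fun hb => qconn_trans S X h hb⟩

lemma crs_mono {A B : Set 𝕏} (h : A ⊆ B) : condRangeSet S X A ⊆ condRangeSet S X B := by
  intro s hs
  simp only [condRangeSet, Set.mem_iUnion] at hs ⊢
  obtain ⟨x, hx, hxs⟩ := hs
  exact ⟨x, h hx, hxs⟩

end Aux

/-- Merging two blocks lying in the same connected component of `G_𝒬` leaves the number of
connected components — hence the maximin information `I⋆(S;X̂)` of the induced released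
variable — unchanged. -/
theorem merge_within_component_preserves_maximin {Ω 𝕊 𝕏 : Type*} [Nonempty Ω] [Fintype 𝕊]
    [Fintype 𝕏] (S : Ω → 𝕊) (X : Ω → 𝕏) (Q : Set (Set 𝕏))
    (hQ : IsPartitionOf Q (Set.range X))
    (X1 X2 : Set 𝕏) (h1 : X1 ∈ Q) (h2 : X2 ∈ Q) (hne : X1 ≠ X2)
    (hconn : QConn S X Q X1 X2) :
    (QComponents S X ((Q \ {X1, X2}) ∪ {X1 ∪ X2})).ncard
      = (QComponents S X Q).ncard := by
  classical
  set M : Set 𝕏 := X1 ∪ X2 with hMdef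
  set Q' : Set (Set 𝕏) := (Q \ {X1, X2}) ∪ {M} with hQ'def
  have hdisj : Disjoint X1 X2 := hQ.2.1 X1 h1 X2 h2 hne
  have hX1ne : X1 ≠ M := by
    intro h
    obtain ⟨x, hx⟩ := hQ.1 X2 h2
    exact Set.disjoint_left.1 hdisj (h ▸ Set.mem_union_right X1 hx) hx
  have hX2ne : X2 ≠ M := by
    intro h
    obtain ⟨x, hx⟩ := hQ.1 X1 h1
    exact Set.disjoint_left.1 hdisj hx (h ▸ Set.mem_union_left X2 hx)
  have hMQ : M ∉ Q := by
    intro h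
    obtain ⟨x, hx⟩ := hQ.1 X1 h1
    exact Set.disjoint_left.1 (hQ.2.1 M h X1 h1 (Ne.symm hX1ne))
      (Set.mem_union_left X2 hx) hx
  have hMQ' : M ∈ Q' := Set.mem_union_right _ rfl
  have hmemQ' : ∀ {A : Set 𝕏}, A ∈ Q' ↔ (A ∈ Q ∧ A ≠ X1 ∧ A ≠ X2) ∨ A = M := by
    intro A
    simp only [hQ'def, Set.mem_union, Set.mem_diff, Set.mem_insert_iff, Set.mem_singleton_iff, not_or]
  set φ : Set 𝕏 → Set 𝕏 := fun A => if A = M then X1 else A with hφdef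
  set ψ : Set 𝕏 → Set 𝕏 := fun A => if A = X1 ∨ A = X2 then M else A with hψdef
  have hφM : φ M = X1 := if_pos rfl
  have hφ_of_ne : ∀ {A : Set 𝕏}, A ≠ M → φ A = A := fun h => if_neg h
  have hψ_of : ∀ {A : Set 𝕏}, (A = X1 ∨ A = X2) → ψ A = M := fun h => if_pos h
  have hψ_of_ne : ∀ {A : Set 𝕏}, A ≠ X1 → A ≠ X2 → ψ A = A :=
    fun h h' => if_neg (by tauto)
  have hφmem : ∀ A ∈ Q', φ A ∈ Q := by
    intro A hA
    rcases hmemQ'.1 hA with ⟨hAQ, hA1, _⟩ | rfl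
    · rw [hφ_of_ne (fun h => hMQ (h ▸ hAQ))]; exact hAQ
    · rw [hφM]; exact h1
  have hψmem : ∀ A ∈ Q, ψ A ∈ Q' := by
    intro A hA
    by_cases h12 : A = X1 ∨ A = X2
    · rw [hψ_of h12]; exact hMQ'
    · push_neg at h12
      rw [hψ_of_ne h12.1 h12.2]
      exact hmemQ'.2 (Or.inl ⟨hA, h12.1, h12.2⟩)
  have hψφ : ∀ A ∈ Q', ψ (φ A) = A := by
    intro A hA
    rcases hmemQ'.1 hA with ⟨hAQ, hA1, hA2⟩ | rfl
    · rw [hφ_of_ne (fun h => hMQ (h ▸ hAQ)), hψ_of_ne hA1 hA2]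
    · rw [hφM, hψ_of (Or.inl rfl)]
  have hφψconn : ∀ A ∈ Q, QConn S X Q (φ (ψ A)) A := by
    intro A hA
    by_cases h12 : A = X1 ∨ A = X2
    · rw [hψ_of h12, hφM]
      rcases h12 with rfl | rfl
      · exact ⟨h1, h1, Relation.ReflTransGen.refl⟩
      · exact hconn
    · push_neg at h12
      rw [hψ_of_ne h12.1 h12.2, hφ_of_ne (fun h => hMQ (h ▸ hA))]
      exact ⟨hA, hA, Relation.ReflTransGen.refl⟩
  -- single-step lifting
  have stepψ : ∀ A B : Set 𝕏, QAdj S X Q A B →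
      Relation.ReflTransGen (QAdj S X Q') (ψ A) (ψ B) := by
    rintro A B ⟨hA, hB, hAB, hint⟩
    by_cases hA12 : A = X1 ∨ A = X2
    · by_cases hB12 : B = X1 ∨ B = X2
      · rw [hψ_of hA12, hψ_of hB12]
      · push_neg at hB12
        rw [hψ_of hA12, hψ_of_ne hB12.1 hB12.2]
        refine Relation.ReflTransGen.single
          ⟨hMQ', hmemQ'.2 (Or.inl ⟨hB, hB12.1, hB12.2⟩),
            fun h => hMQ (h ▸ hB), ?_⟩
        obtain ⟨s, hs1, hs2⟩ := hint
        have hsub : A ⊆ M := by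
          rcases hA12 with rfl | rfl
          · exact Set.subset_union_left
          · exact Set.subset_union_right
        exact ⟨s, crs_mono S X hsub hs1, hs2⟩
    · by_cases hB12 : B = X1 ∨ B = X2
      · push_neg at hA12
        rw [hψ_of hB12, hψ_of_ne hA12.1 hA12.2]
        refine Relation.ReflTransGen.single
          ⟨hmemQ'.2 (Or.inl ⟨hA, hA12.1, hA12.2⟩), hMQ',
            fun h => hMQ (h ▸ hA), ?_⟩
        obtain ⟨s, hs1, hs2⟩ := hint
        have hsub : B ⊆ M := by
          rcases hB12 with rfl | rfl
          · exact Set.subset_union_left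
          · exact Set.subset_union_right
        exact ⟨s, hs1, crs_mono S X hsub hs2⟩
      · push_neg at hA12; push_neg at hB12
        rw [hψ_of_ne hA12.1 hA12.2, hψ_of_ne hB12.1 hB12.2]
        exact Relation.ReflTransGen.single
          ⟨hmemQ'.2 (Or.inl ⟨hA, hA12.1, hA12.2⟩),
           hmemQ'.2 (Or.inl ⟨hB, hB12.1, hB12.2⟩), hAB, hint⟩
  have edgeM : ∀ B : Set 𝕏, B ∈ Q → B ≠ X1 → B ≠ X2 →
      (condRangeSet S X M ∩ condRangeSet S X B).Nonempty →
      Relation.ReflTransGen (QAdj S X Q) X1 B := by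
    intro B hB hB1 hB2 hint
    obtain ⟨s, hs1, hs2⟩ := hint
    simp only [condRangeSet, Set.mem_iUnion] at hs1
    obtain ⟨x, hx, hxs⟩ := hs1
    rcases hx with hx | hx
    · refine Relation.ReflTransGen.single ⟨h1, hB, Ne.symm hB1, s, ?_, hs2⟩
      simp only [condRangeSet, Set.mem_iUnion]
      exact ⟨x, hx, hxs⟩
    · refine hconn.2.2.tail ⟨h2, hB, Ne.symm hB2, s, ?_, hs2⟩
      simp only [condRangeSet, Set.mem_iUnion]
      exact ⟨x, hx, hxs⟩
  have stepφ : ∀ A B : Set 𝕏, QAdj S X Q' A B →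
      Relation.ReflTransGen (QAdj S X Q) (φ A) (φ B) := by
    rintro A B ⟨hA, hB, hAB, hint⟩
    by_cases hAM : A = M
    · rcases hmemQ'.1 hB with ⟨hBQ, hB1, hB2⟩ | hBM
      · rw [hAM, hφM, hφ_of_ne (fun h => hMQ (h ▸ hBQ))]
        exact edgeM B hBQ hB1 hB2 (hAM ▸ hint)
      · exact absurd (hAM.trans hBM.symm) hAB
    · rcases hmemQ'.1 hA with ⟨hAQ, hA1, hA2⟩ | hAM'
      · by_cases hBM : B = M
        · rw [hBM, hφM, hφ_of_ne hAM]
          have hrev : Relation.ReflTransGen (QAdj S X Q) X1 A := by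
            refine edgeM A hAQ hA1 hA2 ?_
            obtain ⟨s, hs1, hs2⟩ := hint
            exact ⟨s, hBM ▸ hs2, hs1⟩
          haveI : Std.Symm (QAdj S X Q) := ⟨fun _ _ h => qadj_symm S X h⟩; exact Std.Symm.symm _ _ hrev
        · rcases hmemQ'.1 hB with ⟨hBQ, hB1, hB2⟩ | hBM'
          · rw [hφ_of_ne hAM, hφ_of_ne hBM]
            exact Relation.ReflTransGen.single ⟨hAQ, hBQ, hAB, hint⟩
          · exact absurd hBM' hBM
      · exact absurd hAM' hAM
  have liftψ : ∀ {A B : Set 𝕏}, Relation.ReflTransGen (QAdj S X Q) A B →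
      Relation.ReflTransGen (QAdj S X Q') (ψ A) (ψ B) := by
    intro A B h
    induction h with
    | refl => exact Relation.ReflTransGen.refl
    | tail _ h2 ih => exact ih.trans (stepψ _ _ h2)
  have liftφ : ∀ {A B : Set 𝕏}, Relation.ReflTransGen (QAdj S X Q') A B →
      Relation.ReflTransGen (QAdj S X Q) (φ A) (φ B) := by
    intro A B h
    induction h with
    | refl => exact Relation.ReflTransGen.refl
    | tail _ h2 ih => exact ih.trans (stepφ _ _ h2)
  set F : Set (Set 𝕏) → Set (Set 𝕏) := fun C => {B | B ∈ Q ∧ ψ B ∈ C} with hFdef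
  set G : Set (Set 𝕏) → Set (Set 𝕏) := fun C => {B | B ∈ Q' ∧ φ B ∈ C} with hGdef
  have claimF : ∀ A ∈ Q', F {B | QConn S X Q' A B} = {B | QConn S X Q (φ A) B} := by
    intro A hA
    ext B
    simp only [hFdef, Set.mem_setOf_eq]
    constructor
    · rintro ⟨hBQ, hc⟩
      exact ⟨hφmem A hA, hBQ, (liftφ hc.2.2).trans (hφψconn B hBQ).2.2⟩
    · rintro ⟨_, hBQ, hr⟩
      refine ⟨hBQ, hA, hψmem B hBQ, ?_⟩
      have := liftψ hr
      rwa [hψφ A hA] at this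
  have claimG : ∀ A ∈ Q, G {B | QConn S X Q A B} = {B | QConn S X Q' (ψ A) B} := by
    intro A hA
    ext B
    simp only [hGdef, Set.mem_setOf_eq]
    constructor
    · rintro ⟨hBQ', hc⟩
      refine ⟨hψmem A hA, hBQ', ?_⟩
      have := liftψ hc.2.2
      rwa [hψφ B hBQ'] at this
    · rintro ⟨_, hBQ', hr⟩
      exact ⟨hBQ', hA, hφmem B hBQ',
        ((qconn_symm S X (hφψconn A hA)).2.2).trans (liftφ hr)⟩
  have hmapsF : ∀ C ∈ QComponents S X Q', F C ∈ QComponents S X Q := by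
    rintro C ⟨A, hA, rfl⟩
    exact ⟨φ A, hφmem A hA, claimF A hA⟩
  have hmapsG : ∀ C ∈ QComponents S X Q, G C ∈ QComponents S X Q' := by
    rintro C ⟨A, hA, rfl⟩
    exact ⟨ψ A, hψmem A hA, claimG A hA⟩
  have hGF : ∀ C ∈ QComponents S X Q', G (F C) = C := by
    rintro C ⟨A, hA, rfl⟩
    rw [claimF A hA, claimG (φ A) (hφmem A hA), hψφ A hA]
  have hFG : ∀ C ∈ QComponents S X Q, F (G C) = C := by
    rintro C ⟨A, hA, rfl⟩
    rw [claimG A hA, claimF (ψ A) (hψmem A hA)]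
    exact comp_eq_of_conn S X (hφψconn A hA)
  have himg : F '' QComponents S X Q' = QComponents S X Q := by
    apply Set.Subset.antisymm
    · rintro _ ⟨C, hC, rfl⟩
      exact hmapsF C hC
    · intro C hC
      exact ⟨G C, hmapsG C hC, hFG C hC⟩
  have hinj : Set.InjOn F (QComponents S X Q') := by
    intro C hC D hD h
    rw [← hGF C hC, ← hGF D hD, h]
  rw [← himg, Set.ncard_image_of_injOn hinj]
end

section
/- (Steepest-descent merge selection for utility $U_2$, Section V-A-1) Let $V$ be a finite set, $\mathcal{Q}$ a partition of $V$, $\Phi$ a nonempty set of unordered pairs of distinct blocks of $\mathcal{Q}$, and $\bar{d}$ a function assigning a real number to each nonempty subset of $V$ such that $\bar{d}(A \cup B) \geq \max(\bar{d}(A), \bar{d}(B))$ for any two disjoint nonempty subsets $A, B$. For $(\mathcal{X}_1,\mathcal{X}_2) \in \Phi$, let $\mathcal{Q}_{\{\mathcal{X}_1,\mathcal{X}_2\}} = (\mathcal{Q} \setminus \{\mathcal{X}_1,\mathcal{X}_2\}) \cup \{\mathcal{X}_1 \cup \mathcal{X}_2\}$. Then every minimizer of $\bar{d}(\mathcal{X}_1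 \cup \mathcal{X}_2)$ over $\Phi$ is also a minimizer over $\Phi$ of $\max_{\mathcal{X} \in \mathcal{Q}_{\{\mathcal{X}_1,\mathcal{X}_2\}}} \bar{d}(\mathcal{X})$. -/
/-- The partition obtained by merging two blocks. -/
def mergePartition {α : Type*} (Q : Set (Set α)) (A B : Set α) : Set (Set α) :=
  (Q \ {A, B}) ∪ {A ∪ B}

/-!
Every block of `Q` is dominated by the maximum over any merged partition `Q_p`: it either
survives in `Q_p`, or it is `p₁` or `p₂`, whose values are at most `d̄(p₁ ∪ p₂)` by monotonicity.
The one new block `A₁ ∪ A₂` of `Q_A` is dominated by `d̄(p₁ ∪ p₂)` by the minimality of `A`.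
-/

section MergePartition

variable {α : Type*} {Q : Set (Set α)} {A B X : Set α} {f : Set α → ℝ}

theorem union_mem_mergePartition : A ∪ B ∈ mergePartition Q A B :=
  Or.inr rfl

theorem mem_mergePartition_of_mem_of_ne (hX : X ∈ Q) (hXA : X ≠ A) (hXB : X ≠ B) :
    X ∈ mergePartition Q A B :=
  Or.inl ⟨hX, by simp [hXA, hXB]⟩

theorem Set.Finite.mergePartition (hQ : Q.Finite) (A B : Set α) :
    (mergePartition Q A B).Finite :=
  hQ.sdiff.union (Set.finite_singleton _)

theorem le_sSup_image_mergePartition_union (hQ : Q.Finite) :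
    f (A ∪ B) ≤ sSup (f '' mergePartition Q A B) :=
  le_csSup ((hQ.mergePartition A B).image f).bddAbove ⟨_, union_mem_mergePartition, rfl⟩

theorem le_sSup_image_mergePartition_of_mem (hQ : Q.Finite) (hA : f A ≤ f (A ∪ B))
    (hB : f B ≤ f (A ∪ B)) (hX : X ∈ Q) :
    f X ≤ sSup (f '' mergePartition Q A B) := by
  by_cases hXA : X = A
  · exact hXA ▸ hA.trans (le_sSup_image_mergePartition_union hQ)
  by_cases hXB : X = B
  · exact hXB ▸ hB.trans (le_sSup_image_mergePartition_union hQ)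
  exact le_csSup ((hQ.mergePartition A B).image f).bddAbove
    ⟨X, mem_mergePartition_of_mem_of_ne hX hXA hXB, rfl⟩

end MergePartition

theorem merge_selection_U2_general {V : Type*} [Fintype V]
    (Q : Set (Set V)) (hQ : IsPartitionOf Q (Set.univ : Set V))
    (dbar : Set V → ℝ)
    (hmono : ∀ A B : Set V, A.Nonempty → B.Nonempty → Disjoint A B →
      max (dbar A) (dbar B) ≤ dbar (A ∪ B))
    (Φ : Set (Set V × Set V))
    (hΦ : ∀ p ∈ Φ, p.1 ∈ Q ∧ p.2 ∈ Q ∧ p.1 ≠ p.2)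
    (A : Set V × Set V)
    (hmin : ∀ p ∈ Φ, dbar (A.1 ∪ A.2) ≤ dbar (p.1 ∪ p.2)) :
    ∀ p ∈ Φ,
      sSup (dbar '' mergePartition Q A.1 A.2)
        ≤ sSup (dbar '' mergePartition Q p.1 p.2) := by
  obtain ⟨hne, hdisj, -⟩ := hQ
  intro p hp
  obtain ⟨hp₁, hp₂, hp₁₂⟩ := hΦ p hp
  have hfin : Q.Finite := Q.toFinite
  have hmax := hmono p.1 p.2 (hne _ hp₁) (hne _ hp₂) (hdisj _ hp₁ _ hp₂ hp₁₂)
  refine csSup_le ⟨_, _, union_mem_mergePartition, rfl⟩ ?_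
  rintro _ ⟨X, hX | rfl, rfl⟩
  · exact le_sSup_image_mergePartition_of_mem hfin (le_of_max_le_left hmax)
      (le_of_max_le_right hmax) hX.1
  · exact (hmin p hp).trans (le_sSup_image_mergePartition_union hfin)

/-- Steepest-descent merge selection for utility `U₂` (Section V-A-1): if the cluster
distortion `d̄` satisfies `d̄(A ∪ B) ≥ max(d̄(A), d̄(B))` for disjoint nonempty `A`, `B`, then
every minimizer of `d̄(𝒳₁ ∪ 𝒳₂)` over a family `Φ` of pairs of distinct blocks of a partition
`𝒬` of a finite set also minimizes `max_{𝒳 ∈ 𝒬_{𝒳₁,𝒳₂}} d̄(𝒳)` over `Φ`. -/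
theorem merge_selection_U2 {V : Type*} [Fintype V]
    (Q : Set (Set V)) (hQ : IsPartitionOf Q (Set.univ : Set V))
    (dbar : Set V → ℝ)
    (hmono : ∀ A B : Set V, A.Nonempty → B.Nonempty → Disjoint A B →
      max (dbar A) (dbar B) ≤ dbar (A ∪ B))
    (Φ : Set (Set V × Set V)) (hΦne : Φ.Nonempty)
    (hΦ : ∀ p ∈ Φ, p.1 ∈ Q ∧ p.2 ∈ Q ∧ p.1 ≠ p.2)
    (A : Set V × Set V) (hA : A ∈ Φ)
    (hmin : ∀ p ∈ Φ, dbar (A.1 ∪ A.2) ≤ dbar (p.1 ∪ p.2)) :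
    ∀ p ∈ Φ,
      sSup (dbar '' mergePartition Q A.1 A.2)
        ≤ sSup (dbar '' mergePartition Q p.1 p.2) :=
  merge_selection_U2_general Q hQ dbar hmono Φ hΦ A hmin
end
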